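/- arXiv:1709.10505 — 2 statements merged into one kernel-verified Lean document; each statement's English description precedes it below -/
import Mathlib

section
/- Fix x ∈ ℝ. Assume f is bounded on ℝ and twice continuously differentiable in a neighborhood of x, and ∫ K(u)² du < ∞. If h_n = c n^{−1/5} for some constant c > 0, then the mean squared error satisfies E[(f̂_{n,h_n}(x) − f(x))²] = O(n^{−4/5}) as n → ∞. -/
/-!
The mean squared error is variance plus squared bias. By independence the variance of the
estimator is at most `sup f · ∫ K² / (n h)`. Since `∫ K = 1` and `∫ u K(u) du = 0`, the bias
`∫ (f (x - h u) - f x) K(u) du` only sees the first-order Taylor remainder of `f` at `x`, which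
is `O((y - x)²)` near `x` by `C²` smoothness and globally because `f` is bounded; hence the bias
is `O(h²)`. The bandwidth `h = c n^{-1/5}` makes both `1 / (n h)` and `h⁴` of order `n^{-4/5}`.
-/

open MeasureTheory ProbabilityTheory Filter Asymptotics Topology

/-- The kernel density estimator `f̂_{n,h}(x) = (1/(nh)) Σ_{i<n} K((x - X_i)/h)`. -/
noncomputable def kde {Ω : Type*} (K : ℝ → ℝ) (X : ℕ → Ω → ℝ)
    (n : ℕ) (h x : ℝ) (ω : Ω) : ℝ :=
  (1 / (n * h)) * ∑ i ∈ Finset.range n, K ((x - X i ω) / h)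

theorem ContDiffAt.isBigO_sub_sub_mul_deriv {f : ℝ → ℝ} {x : ℝ} (hf : ContDiffAt ℝ 2 f x) :
    (fun y => f y - f x - (y - x) * deriv f x) =O[𝓝 x] fun y => (y - x) ^ 2 := by
  obtain ⟨s, hs, hfs⟩ := hf.contDiffOn le_rfl (by simp)
  obtain ⟨r, hr, hball⟩ := Metric.mem_nhds_iff.1 hs
  have hxr : x ∈ Metric.ball x r := Metric.mem_ball_self hr
  have hpeano := taylor_isLittleO (convex_ball x r) hxr (hfs.mono hball) (n := 2)
  rw [nhdsWithin_eq_nhds.2 (Metric.ball_mem_nhds x hr)] at hpeano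
  set f₂ := iteratedDerivWithin 2 f (Metric.ball x r) x
  have htaylor : ∀ y, taylorWithinEval f 2 (Metric.ball x r) x y
      = f x + (y - x) * deriv f x + 2⁻¹ * (y - x) ^ 2 * f₂ := fun y => by
    simp [taylor_within_apply, iteratedDerivWithin_one,
      derivWithin_of_isOpen Metric.isOpen_ball hxr, one_add_one_eq_two, f₂]
  -- Peano's second-order remainder is `o((y - x)²)`; the quadratic Taylor term is `O((y - x)²)`.
  refine (hpeano.isBigO.add ((isBigO_refl (fun y => (y - x) ^ 2) (𝓝 x)).const_mul_left
    (2⁻¹ * f₂))).congr_left fun y => ?_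
  rw [htaylor]
  ring

theorem exists_abs_le_mul_sq_of_isBigO {R : ℝ → ℝ} {x A B : ℝ}
    (hloc : R =O[𝓝 x] fun y => (y - x) ^ 2) (hlin : ∀ y, |R y| ≤ A + B * |y - x|) :
    ∃ C, ∀ y, |R y| ≤ C * (y - x) ^ 2 := by
  obtain ⟨C₁, hC₁⟩ := hloc.bound
  obtain ⟨r, hr, hball⟩ := Metric.mem_nhds_iff.1 hC₁
  refine ⟨max C₁ (|A| / r ^ 2 + |B| / r), fun y => ?_⟩
  have hsq : 0 ≤ (y - x) ^ 2 := sq_nonneg _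
  rcases lt_or_ge |y - x| r with hnear | hfar
  · have hy : |R y| ≤ C₁ * (y - x) ^ 2 := by
      simpa [Real.norm_eq_abs] using hball (show y ∈ Metric.ball x r from hnear)
    exact hy.trans (mul_le_mul_of_nonneg_right (le_max_left _ _) hsq)
  · have hA : A ≤ |A| / r ^ 2 * (y - x) ^ 2 := by
      rw [div_mul_eq_mul_div, le_div_iff₀ (by positivity), ← sq_abs (y - x)]
      nlinarith [le_abs_self A, abs_nonneg A, pow_le_pow_left₀ hr.le hfar 2]
    have hB : B * |y - x| ≤ |B| / r * (y - x) ^ 2 := by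
      rw [div_mul_eq_mul_div, le_div_iff₀ hr, ← sq_abs (y - x)]
      calc B * |y - x| * r ≤ |B| * |y - x| * r := by gcongr; exact le_abs_self B
        _ ≤ |B| * |y - x| * |y - x| := by gcongr
        _ = |B| * |y - x| ^ 2 := by ring
    calc |R y| ≤ A + B * |y - x| := hlin y
      _ ≤ (|A| / r ^ 2 + |B| / r) * (y - x) ^ 2 := by linarith
      _ ≤ max C₁ (|A| / r ^ 2 + |B| / r) * (y - x) ^ 2 :=
        mul_le_mul_of_nonneg_right (le_max_right _ _) hsq

theorem exists_abs_sub_sub_mul_deriv_le_mul_sq {f : ℝ → ℝ} {x M : ℝ} (hM : ∀ y, |f y| ≤ M)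
    (hf : ContDiffAt ℝ 2 f x) :
    ∃ C, ∀ y, |f y - f x - (y - x) * deriv f x| ≤ C * (y - x) ^ 2 := by
  refine exists_abs_le_mul_sq_of_isBigO hf.isBigO_sub_sub_mul_deriv
    (A := 2 * M) (B := |deriv f x|) fun y => ?_
  calc |f y - f x - (y - x) * deriv f x| ≤ |f y - f x| + |(y - x) * deriv f x| := abs_sub _ _
    _ ≤ |f y| + |f x| + |(y - x) * deriv f x| := by gcongr; exact abs_sub _ _
    _ ≤ 2 * M + |deriv f x| * |y - x| := by
        rw [abs_mul, mul_comm]; linarith [hM y, hM x]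

theorem abs_integral_comp_sub_mul_mul_sub_le {f K : ℝ → ℝ} {x a C : ℝ}
    (htaylor : ∀ y, |f y - f x - (y - x) * a| ≤ C * (y - x) ^ 2)
    (hK : Integrable K) (hK_one : ∫ u, K u = 1)
    (huK : Integrable fun u => u * K u) (huK_zero : ∫ u, u * K u = 0)
    (hu2K : Integrable fun u => u ^ 2 * |K u|) (H : ℝ)
    (hfK : Integrable fun u => f (x - H * u) * K u) :
    |(∫ u, f (x - H * u) * K u) - f x| ≤ C * (∫ u, u ^ 2 * |K u|) * H ^ 2 := by
  have hremainder : (∫ u, f (x - H * u) * K u) - f x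
      = ∫ u, (f (x - H * u) - f x - (x - H * u - x) * a) * K u := by
    have hexpand : (fun u => (f (x - H * u) - f x - (x - H * u - x) * a) * K u)
        = fun u => f (x - H * u) * K u - f x * K u + (a * H) * (u * K u) := by
      funext u; ring
    rw [hexpand, integral_add ?_ (huK.const_mul _), integral_sub hfK (hK.const_mul _),
      integral_const_mul, integral_const_mul, hK_one, huK_zero]
    · ring
    · exact hfK.sub (hK.const_mul _)
  have hbound : ∀ u, ‖(f (x - H * u) - f x - (x - H * u - x) * a) * K u‖
      ≤ C * H ^ 2 * (u ^ 2 * |K u|) := fun u => by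
    rw [Real.norm_eq_abs, abs_mul]
    calc |f (x - H * u) - f x - (x - H * u - x) * a| * |K u|
        ≤ C * (x - H * u - x) ^ 2 * |K u| := by gcongr; exact htaylor _
      _ = C * H ^ 2 * (u ^ 2 * |K u|) := by ring
  rw [hremainder, ← Real.norm_eq_abs]
  calc _ ≤ ∫ u, C * H ^ 2 * (u ^ 2 * |K u|) := norm_integral_le_of_norm_le
        (hu2K.const_mul _) (ae_of_all _ hbound)
    _ = C * (∫ u, u ^ 2 * |K u|) * H ^ 2 := by rw [integral_const_mul]; ring

theorem integral_sub_sq_eq_variance_add {Ω : Type*} [MeasurableSpace Ω] {P : Measure Ω}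
    [IsProbabilityMeasure P] {Z : Ω → ℝ} (hZ : MemLp Z 2 P) (b : ℝ) :
    ∫ ω, (Z ω - b) ^ 2 ∂P = variance Z P + (∫ ω, Z ω ∂P - b) ^ 2 := by
  have hZb : MemLp (fun ω => Z ω - b) 2 P := hZ.sub (memLp_const b)
  have hmean : ∫ ω, (Z ω - b) ∂P = ∫ ω, Z ω ∂P - b := by
    rw [integral_sub (hZ.integrable one_le_two) (integrable_const b)]
    simp
  rw [← variance_sub_const hZ.aestronglyMeasurable b, variance_eq_sub hZb, ← hmean]
  simp

theorem kde_eq_smul_sum {Ω : Type*} (K : ℝ → ℝ) (X : ℕ → Ω → ℝ) (n : ℕ) (H x : ℝ) :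
    (fun ω => kde K X n H x ω)
      = (1 / (n * H)) • ∑ i ∈ Finset.range n, fun ω => K ((x - X i ω) / H) := by
  funext ω
  simp only [kde, Pi.smul_apply, Finset.sum_apply, smul_eq_mul]

section Estimator

variable {Ω : Type*} [MeasurableSpace Ω] {P : Measure Ω}

theorem integral_comp_eq_integral_mul_density {Y : Ω → ℝ} (hY : Measurable Y) {f : ℝ → ℝ}
    (hf : Measurable f) (hf_nonneg : ∀ y, 0 ≤ f y)
    (hlaw : P.map Y = volume.withDensity fun y => ENNReal.ofReal (f y))
    {φ : ℝ → ℝ} (hφ : Measurable φ) :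
    ∫ ω, φ (Y ω) ∂P = ∫ y, f y * φ y := by
  rw [← integral_map hY.aemeasurable hφ.aestronglyMeasurable, hlaw,
    integral_withDensity_eq_integral_toReal_smul hf.ennreal_ofReal
      (ae_of_all _ fun _ => ENNReal.ofReal_lt_top)]
  simp only [ENNReal.toReal_ofReal (hf_nonneg _), smul_eq_mul]

theorem integral_comp_sub_div_eq {Y : Ω → ℝ} (hY : Measurable Y) {f : ℝ → ℝ}
    (hf : Measurable f) (hf_nonneg : ∀ y, 0 ≤ f y)
    (hlaw : P.map Y = volume.withDensity fun y => ENNReal.ofReal (f y))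
    {ψ : ℝ → ℝ} (hψ : Measurable ψ) (x : ℝ) {H : ℝ} (hH : 0 < H) :
    ∫ ω, ψ ((x - Y ω) / H) ∂P = H * ∫ u, f (x - H * u) * ψ u := by
  have hφ : Measurable fun y => ψ ((x - y) / H) := hψ.comp (by fun_prop)
  have hinv : ∀ y, x - H * ((x - y) / H) = y := fun y => by field_simp; ring
  rw [integral_comp_eq_integral_mul_density hY hf hf_nonneg hlaw hφ]
  calc ∫ y, f y * ψ ((x - y) / H)
      = ∫ y, (fun z => f (x - H * (z / H)) * ψ (z / H)) (x - y) := by simp only [hinv]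
    _ = ∫ z, f (x - H * (z / H)) * ψ (z / H) :=
      integral_sub_left_eq_self (fun z => f (x - H * (z / H)) * ψ (z / H)) volume x
    _ = H * ∫ u, f (x - H * u) * ψ u := by
      rw [Measure.integral_comp_div (fun u => f (x - H * u) * ψ u), abs_of_pos hH, smul_eq_mul]

theorem memLp_comp_sub_div [IsFiniteMeasure P] {K : ℝ → ℝ} (hK : Measurable K) {M : ℝ}
    (hM : ∀ u, |K u| ≤ M) {Y : Ω → ℝ} (hY : Measurable Y) (p : ENNReal) (x H : ℝ) :
    MemLp (fun ω => K ((x - Y ω) / H)) p P :=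
  MemLp.of_bound (hK.comp (by fun_prop)).aestronglyMeasurable M (ae_of_all _ fun _ => hM _)

variable [IsProbabilityMeasure P] {X : ℕ → Ω → ℝ} {f K : ℝ → ℝ}

theorem integral_kde (hX : ∀ i, Measurable (X i)) (hf : Measurable f)
    (hf_nonneg : ∀ y, 0 ≤ f y)
    (hlaw : ∀ i, P.map (X i) = volume.withDensity fun y => ENNReal.ofReal (f y))
    (hK : Measurable K) {M : ℝ} (hM : ∀ u, |K u| ≤ M) {n : ℕ} (hn : n ≠ 0) (x : ℝ) {H : ℝ}
    (hH : 0 < H) :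
    ∫ ω, kde K X n H x ω ∂P = ∫ u, f (x - H * u) * K u := by
  simp only [kde]
  rw [integral_const_mul, integral_finsetSum _ fun i _ =>
    (memLp_comp_sub_div hK hM (hX i) 1 x H).integrable le_rfl]
  simp only [integral_comp_sub_div_eq (hX _) hf hf_nonneg (hlaw _) hK x hH, Finset.sum_const,
    Finset.card_range, nsmul_eq_mul]
  field_simp

theorem variance_kde_le (hX : ∀ i, Measurable (X i)) (hindep : iIndepFun X P)
    (hf : Measurable f) (hf_nonneg : ∀ y, 0 ≤ f y)
    (hlaw : ∀ i, P.map (X i) = volume.withDensity fun y => ENNReal.ofReal (f y))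
    {M : ℝ} (hfM : ∀ y, |f y| ≤ M) (hK : Measurable K) {MK : ℝ} (hMK : ∀ u, |K u| ≤ MK)
    (hK_sq : Integrable fun u => K u ^ 2) (n : ℕ) (x : ℝ) {H : ℝ} (hH : 0 < H) :
    variance (fun ω => kde K X n H x ω) P ≤ M * (∫ u, K u ^ 2) / (n * H) := by
  set Y : ℕ → Ω → ℝ := fun i ω => K ((x - X i ω) / H)
  have hY : ∀ i, MemLp (Y i) 2 P := fun i => memLp_comp_sub_div hK hMK (hX i) 2 x H
  have hY_indep : iIndepFun Y P :=
    hindep.comp (fun _ y => K ((x - y) / H)) fun _ => hK.comp (by fun_prop)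
  have hvar_Y : ∀ i, variance (Y i) P ≤ H * (M * ∫ u, K u ^ 2) := fun i => calc
    variance (Y i) P ≤ ∫ ω, K ((x - X i ω) / H) ^ 2 ∂P :=
      variance_le_expectation_sq (hY i).aestronglyMeasurable
    _ = H * ∫ u, f (x - H * u) * K u ^ 2 :=
      integral_comp_sub_div_eq (hX i) hf hf_nonneg (hlaw i) (hK.pow_const 2) x hH
    _ ≤ H * ∫ u, M * K u ^ 2 := by
      refine mul_le_mul_of_nonneg_left (integral_mono ?_ (hK_sq.const_mul M) fun u => ?_) hH.le
      · exact hK_sq.bdd_mul (hf.comp (by fun_prop)).aestronglyMeasurable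
          (ae_of_all _ fun u => hfM _)
      · exact mul_le_mul_of_nonneg_right ((le_abs_self _).trans (hfM _)) (sq_nonneg _)
    _ = H * (M * ∫ u, K u ^ 2) := by rw [integral_const_mul]
  rw [kde_eq_smul_sum, variance_smul,
    IndepFun.variance_sum (fun i _ => hY i) fun i _ j _ hij => hY_indep.indepFun hij]
  calc (1 / (n * H)) ^ 2 * ∑ i ∈ Finset.range n, variance (Y i) P
      ≤ (1 / (n * H)) ^ 2 * (n * (H * (M * ∫ u, K u ^ 2))) := by
        gcongr
        simpa using Finset.sum_le_sum fun i (_ : i ∈ Finset.range n) => hvar_Y i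
    _ = M * (∫ u, K u ^ 2) / (n * H) := by
        rcases eq_or_ne (n : ℝ) 0 with hn | hn
        · simp [hn]
        · field_simp

theorem integral_kde_sub_sq_le (hX : ∀ i, Measurable (X i)) (hindep : iIndepFun X P)
    (hf : Measurable f) (hf_nonneg : ∀ y, 0 ≤ f y)
    (hlaw : ∀ i, P.map (X i) = volume.withDensity fun y => ENNReal.ofReal (f y))
    {M : ℝ} (hfM : ∀ y, |f y| ≤ M) {x a C : ℝ}
    (htaylor : ∀ y, |f y - f x - (y - x) * a| ≤ C * (y - x) ^ 2)
    (hK : Measurable K) {MK : ℝ} (hMK : ∀ u, |K u| ≤ MK)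
    (hK_int : Integrable K) (hK_one : ∫ u, K u = 1)
    (huK : Integrable fun u => u * K u) (huK_zero : ∫ u, u * K u = 0)
    (hu2K : Integrable fun u => u ^ 2 * |K u|) (hK_sq : Integrable fun u => K u ^ 2)
    {n : ℕ} (hn : n ≠ 0) {H : ℝ} (hH : 0 < H) :
    ∫ ω, (kde K X n H x ω - f x) ^ 2 ∂P
      ≤ M * (∫ u, K u ^ 2) / (n * H) + (C * ∫ u, u ^ 2 * |K u|) ^ 2 * H ^ 4 := by
  have hkde : MemLp (fun ω => kde K X n H x ω) 2 P := by
    rw [kde_eq_smul_sum]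
    exact (memLp_finsetSum' _ fun i _ => memLp_comp_sub_div hK hMK (hX i) 2 x H).const_smul _
  have hfK : Integrable fun u => f (x - H * u) * K u :=
    hK_int.bdd_mul (hf.comp (by fun_prop)).aestronglyMeasurable (ae_of_all _ fun u => hfM _)
  have hbias := abs_integral_comp_sub_mul_mul_sub_le htaylor hK_int hK_one huK huK_zero hu2K H hfK
  rw [integral_sub_sq_eq_variance_add hkde, integral_kde hX hf hf_nonneg hlaw hK hMK hn x hH]
  calc _ ≤ M * (∫ u, K u ^ 2) / (n * H) + (C * (∫ u, u ^ 2 * |K u|) * H ^ 2) ^ 2 :=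
        add_le_add (variance_kde_le hX hindep hf hf_nonneg hlaw hfM hK hMK hK_sq n x hH)
          (sq_le_sq.2 (hbias.trans (le_abs_self _)))
    _ = _ := by ring

end Estimator

theorem div_mul_add_mul_pow_four_eq_mul_rpow {c t : ℝ} (hc : c ≠ 0) (ht : 0 < t) (A B : ℝ) :
    A / (t * (c * t ^ (-(1 : ℝ) / 5))) + B * (c * t ^ (-(1 : ℝ) / 5)) ^ 4
      = (A / c + B * c ^ 4) * t ^ (-(4 : ℝ) / 5) := by
  have hvar : t * t ^ (-(1 : ℝ) / 5) = (t ^ (-(4 : ℝ) / 5))⁻¹ := by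
    rw [← Real.rpow_neg ht.le, ← Real.rpow_one_add' ht.le (by norm_num)]
    norm_num
  have hbias : (t ^ (-(1 : ℝ) / 5)) ^ 4 = t ^ (-(4 : ℝ) / 5) := by
    rw [← Real.rpow_natCast, ← Real.rpow_mul ht.le]
    norm_num
  rw [mul_pow, hbias, mul_left_comm, hvar]
  field_simp

theorem mse_kde_general {Ω : Type*} [MeasurableSpace Ω] (P : Measure Ω) [IsProbabilityMeasure P]
    -- the i.i.d. sample with common density f
    (X : ℕ → Ω → ℝ) (hXmeas : ∀ i, Measurable (X i))
    (hXindep : iIndepFun X P)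
    (f : ℝ → ℝ) (hfmeas : Measurable f) (hfnonneg : ∀ y, 0 ≤ f y)
    (hXlaw : ∀ i, Measure.map (X i) P = volume.withDensity fun y => ENNReal.ofReal (f y))
    -- the kernel: measurable, of bounded variation, right-continuous, bounded,
    -- with ∫ K = 1, ∫ u K(u) du = 0, ∫ u² |K(u)| du < ∞ and ∫ K(u)² du < ∞
    (K : ℝ → ℝ) (hKmeas : Measurable K)
    (hKbdd : ∃ M, ∀ u, |K u| ≤ M)
    (hKint : Integrable K volume) (hKone : (∫ u, K u) = 1)
    (hKuint : Integrable (fun u => u * K u) volume) (hKuzero : (∫ u, u * K u) = 0)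
    (hKu2int : Integrable (fun u => u ^ 2 * |K u|) volume)
    (hKsqint : Integrable (fun u => (K u) ^ 2) volume)
    -- the point x, f bounded and twice continuously differentiable near x
    (x : ℝ) (hfbdd : ∃ M, ∀ y, |f y| ≤ M)
    (hfC2 : ∃ s ∈ 𝓝 x, ContDiffOn ℝ 2 f s)
    -- bandwidth h_n = c n^{-1/5}
    (c : ℝ) (hc : 0 < c)
    (h : ℕ → ℝ) (hdef : ∀ n, h n = c * (n : ℝ) ^ (-(1 : ℝ) / 5)) :
    (fun n : ℕ => ∫ ω, (kde K X n (h n) x ω - f x) ^ 2 ∂P)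
      =O[atTop] (fun n : ℕ => (n : ℝ) ^ (-(4 : ℝ) / 5)) := by
  obtain ⟨MK, hMK⟩ := hKbdd
  obtain ⟨M, hfM⟩ := hfbdd
  obtain ⟨s, hs, hfs⟩ := hfC2
  obtain ⟨C, htaylor⟩ := exists_abs_sub_sub_mul_deriv_le_mul_sq hfM (hfs.contDiffAt hs)
  set A := M * ∫ u, K u ^ 2
  set B := (C * ∫ u, u ^ 2 * |K u|) ^ 2
  refine IsBigO.of_bound (A / c + B * c ^ 4) ?_
  filter_upwards [eventually_ne_atTop 0] with n hn
  have hn_pos : (0 : ℝ) < n := by positivity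
  have hH : 0 < h n := by rw [hdef]; positivity
  rw [Real.norm_of_nonneg (integral_nonneg fun _ => sq_nonneg _),
    Real.norm_of_nonneg (Real.rpow_nonneg hn_pos.le _)]
  calc _ ≤ A / (n * h n) + B * h n ^ 4 :=
        integral_kde_sub_sq_le hXmeas hXindep hfmeas hfnonneg hXlaw hfM htaylor hKmeas hMK hKint
          hKone hKuint hKuzero hKu2int hKsqint hn hH
    _ = (A / c + B * c ^ 4) * (n : ℝ) ^ (-(4 : ℝ) / 5) := by
        rw [hdef]
        exact div_mul_add_mul_pow_four_eq_mul_rpow hc.ne' hn_pos A B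

/-- with `h_n = c n^{-1/5}`,
`E[(f̂_{n,h_n}(x) − f(x))²] = O(n^{-4/5})` as `n → ∞`. -/
theorem mse_kde {Ω : Type*} [MeasurableSpace Ω] (P : Measure Ω) [IsProbabilityMeasure P]
    -- the i.i.d. sample with common density f
    (X : ℕ → Ω → ℝ) (hXmeas : ∀ i, Measurable (X i))
    (hXindep : iIndepFun X P)
    (f : ℝ → ℝ) (hfmeas : Measurable f) (hfnonneg : ∀ y, 0 ≤ f y)
    (hXlaw : ∀ i, Measure.map (X i) P = volume.withDensity fun y => ENNReal.ofReal (f y))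
    -- the kernel: measurable, of bounded variation, right-continuous, bounded,
    -- with ∫ K = 1, ∫ u K(u) du = 0, ∫ u² |K(u)| du < ∞ and ∫ K(u)² du < ∞
    (K : ℝ → ℝ) (hKmeas : Measurable K)
    (hKbv : BoundedVariationOn K Set.univ)
    (hKrc : ∀ u, ContinuousWithinAt K (Set.Ici u) u)
    (hKbdd : ∃ M, ∀ u, |K u| ≤ M)
    (hKint : Integrable K volume) (hKone : (∫ u, K u) = 1)
    (hKuint : Integrable (fun u => u * K u) volume) (hKuzero : (∫ u, u * K u) = 0)
    (hKu2int : Integrable (fun u => u ^ 2 * |K u|) volume)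
    (hKsqint : Integrable (fun u => (K u) ^ 2) volume)
    -- the point x, f bounded and twice continuously differentiable near x
    (x : ℝ) (hfbdd : ∃ M, ∀ y, |f y| ≤ M)
    (hfC2 : ∃ s ∈ 𝓝 x, ContDiffOn ℝ 2 f s)
    -- bandwidth h_n = c n^{-1/5}
    (c : ℝ) (hc : 0 < c)
    (h : ℕ → ℝ) (hdef : ∀ n, h n = c * (n : ℝ) ^ (-(1 : ℝ) / 5)) :
    (fun n : ℕ => ∫ ω, (kde K X n (h n) x ω - f x) ^ 2 ∂P)
      =O[atTop] (fun n : ℕ => (n : ℝ) ^ (-(4 : ℝ) / 5)) :=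
  mse_kde_general P X hXmeas hXindep f hfmeas hfnonneg hXlaw K hKmeas hKbdd hKint hKone hKuint
    hKuzero hKu2int hKsqint x hfbdd hfC2 c hc h hdef
end

section
/- (Liese–Vajda homogeneity characterization, degree 1.) If the Bregman divergence is homogeneous of degree 1, i.e. D_φ(kp, kq) = k D_φ(p, q) for all p, q, k > 0, then there exist constants c > 0 and a, b ∈ ℝ such that φ(t) = c t log t + a t + b for all t > 0. -/
/-!
Adding `D_φ(p, q)` and `D_φ(q, p)` eliminates `φ`: the sum is `(p - q) (φ'(p) - φ'(q))`, so
homogeneity of degree 1 says exactly that `φ'(kp) - φ'(kq) = φ'(p) - φ'(q)`. Hence `φ' ∘ exp`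
is a continuous solution of Cauchy's equation up to a constant, i.e. `φ' = c log + d`, and
integrating gives `φ(t) = c t log t + (d - c) t + b`. Strict convexity makes `φ'` strictly
increasing, so `c > 0`.
-/

open Real Set

def bregmanDiv (φ φ' : ℝ → ℝ) (p q : ℝ) : ℝ :=
  φ p - φ q - (p - q) * φ' q

lemma bregmanDiv_add_bregmanDiv_swap (φ φ' : ℝ → ℝ) (p q : ℝ) :
    bregmanDiv φ φ' p q + bregmanDiv φ φ' q p = (p - q) * (φ' p - φ' q) := by
  unfold bregmanDiv
  ring

lemma sub_apply_mul_eq_of_bregmanDiv_homogeneous {φ φ' : ℝ → ℝ}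
    (hhom : ∀ p q k : ℝ, 0 < p → 0 < q → 0 < k →
      bregmanDiv φ φ' (k * p) (k * q) = k * bregmanDiv φ φ' p q)
    {p q k : ℝ} (hp : 0 < p) (hq : 0 < q) (hk : 0 < k) :
    φ' (k * p) - φ' (k * q) = φ' p - φ' q := by
  rcases eq_or_ne p q with rfl | hpq
  · simp
  have h := bregmanDiv_add_bregmanDiv_swap φ φ' (k * p) (k * q)
  rw [hhom p q k hp hq hk, hhom q p k hq hp hk, ← mul_add,
    bregmanDiv_add_bregmanDiv_swap] at h
  refine mul_left_cancel₀ (mul_ne_zero hk.ne' (sub_ne_zero.2 hpq)) ?_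
  linear_combination -h

lemma eq_mul_log_add_of_continuousOn_of_sub_eq {g : ℝ → ℝ} (hg : ContinuousOn g (Ioi 0))
    (hmul : ∀ x y : ℝ, 0 < x → 0 < y → g (x * y) - g x = g y - g 1) {t : ℝ} (ht : 0 < t) :
    g t = (g (exp 1) - g 1) * log t + g 1 := by
  let G : ℝ →+ ℝ :=
    { toFun := fun x => g (exp x) - g 1
      map_zero' := by simp
      map_add' := fun x y => by
        simp only [exp_add]
        linarith [hmul (exp x) (exp y) (exp_pos x) (exp_pos y)] }
  have hG : Continuous G := (hg.comp_continuous continuous_exp exp_pos).sub continuous_const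
  have h := map_real_smul G hG (log t) 1
  simp only [G, AddMonoidHom.coe_mk, ZeroHom.coe_mk, smul_eq_mul, mul_one, exp_log ht] at h
  linarith

lemma eq_mul_mul_log_add_of_hasDerivAt {f : ℝ → ℝ} {c d : ℝ}
    (hf : ∀ t ∈ Ioi (0 : ℝ), HasDerivAt f (c * log t + d) t) {t : ℝ} (ht : 0 < t) :
    f t = c * t * log t + (d - c) * t + (f 1 - (d - c)) := by
  have hF : ∀ t ∈ Ioi (0 : ℝ),
      HasDerivAt (fun t => c * t * log t + (d - c) * t + (f 1 - (d - c))) (c * log t + d) t := by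
    intro t ht
    have h := (((hasDerivAt_mul_log (ne_of_gt ht)).const_mul c).add
      ((hasDerivAt_id t).const_mul (d - c))).add_const (f 1 - (d - c))
    refine (h.congr_deriv (by ring)).congr_of_eventuallyEq (.of_forall fun s => ?_)
    simp only [Pi.add_apply, id]
    ring
  exact isOpen_Ioi.eqOn_of_deriv_eq isPreconnected_Ioi
    (fun x hx => (hf x hx).differentiableAt.differentiableWithinAt)
    (fun x hx => (hF x hx).differentiableAt.differentiableWithinAt)
    (fun x hx => by rw [(hf x hx).deriv, (hF x hx).deriv]) (mem_Ioi.2 one_pos) (by simp) ht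

/-- Liese–Vajda, degree 1: if the pointwise Bregman divergence
`D_φ(p,q) = φ(p) − φ(q) − (p − q) φ'(q)` of a continuously differentiable,
strictly convex `φ : (0,∞) → ℝ` satisfies `D_φ(kp, kq) = k D_φ(p,q)` for all
`p, q, k > 0`, then `φ(t) = c t log t + a t + b` on `(0,∞)` for some `c > 0`,
`a, b ∈ ℝ`. -/
theorem liese_vajda_degree_one (φ φ' : ℝ → ℝ)
    (hderiv : ∀ t ∈ Set.Ioi (0 : ℝ), HasDerivAt φ (φ' t) t)
    (hderivcont : ContinuousOn φ' (Set.Ioi (0 : ℝ)))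
    (hconv : StrictConvexOn ℝ (Set.Ioi (0 : ℝ)) φ)
    (hhom : ∀ p q k : ℝ, 0 < p → 0 < q → 0 < k →
      φ (k * p) - φ (k * q) - (k * p - k * q) * φ' (k * q)
        = k * (φ p - φ q - (p - q) * φ' q)) :
    ∃ c a b : ℝ, 0 < c ∧ ∀ t : ℝ, 0 < t → φ t = c * t * Real.log t + a * t + b := by
  have hmul : ∀ x y : ℝ, 0 < x → 0 < y → φ' (x * y) - φ' x = φ' y - φ' 1 :=
    fun x y hx hy => by simpa using sub_apply_mul_eq_of_bregmanDiv_homogeneous hhom hy one_pos hx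
  have h1 : (1 : ℝ) ∈ Ioi 0 := mem_Ioi.2 one_pos
  have he : exp 1 ∈ Ioi 0 := exp_pos 1
  have hlt : 1 < exp 1 := one_lt_exp_iff.2 one_pos
  have hc : φ' 1 < φ' (exp 1) :=
    (hconv.lt_slope_of_hasDerivAt h1 he hlt (hderiv 1 h1)).trans
      (hconv.slope_lt_of_hasDerivAt h1 he hlt (hderiv _ he))
  have hderiv_log : ∀ t ∈ Ioi (0 : ℝ), HasDerivAt φ ((φ' (exp 1) - φ' 1) * log t + φ' 1) t :=
    fun t ht =>
      eq_mul_log_add_of_continuousOn_of_sub_eq hderivcont hmul ht ▸ hderiv t ht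
  exact ⟨_, _, _, sub_pos.2 hc, fun t ht => eq_mul_mul_log_add_of_hasDerivAt hderiv_log ht⟩
end
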